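/- arXiv:1804.01351 — 3 statements merged into one kernel-verified Lean document; each statement's English description precedes it below -/
import Mathlib

section
/- In the equal load redistribution cascade, non-attacked lines fail in order of increasing free space: if a non-attacked line i fails at some stage of the cascade initiated by attack set A, then every non-attacked line j with S_j <= S_i also fails by the end of the cascade. Consequently, the final alive set is of the form {i ∉ A : S_i > x} for some threshold x >= 0. -/
open Finset
open scoped Classical

/-- One step of the equal load redistribution cascade: every alive line whose
free space is at most the total failed load divided by the number of alive lines fails. -/
noncomputable def step {N : ℕ} (L S : Fin N → ℝ) (F : Finset (Fin N)) : Finset (Fin N) :=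
  F ∪ Finset.univ.filter (fun i => S i ≤ (∑ j ∈ F, L j) / ((N : ℝ) - F.card))

/-- The steady state (final failed set) of the cascade initiated by attack set `A`. -/
noncomputable def cascade {N : ℕ} (L S : Fin N → ℝ) (A : Finset (Fin N)) : Finset (Fin N) :=
  (step L S)^[N] A

/-!
A line that fails in round `k + 1` of the cascade does so because its free space is at most the
extra load per alive line after round `k`, a quantity common to all lines; every line with no more
free space therefore fails in that round or earlier. The final alive set is then cut off by the
largest free space of a failed non-attacked line (or by `0` if there is none).
-/

theorem exists_compl_eq_filter_lt {α : Type*} [Fintype α] [DecidableEq α] (S : α → ℝ)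
    (hS : ∀ i, 0 < S i) {A C : Finset α} (hAC : A ⊆ C)
    (hdown : ∀ i ∉ A, i ∈ C → ∀ j ∉ A, S j ≤ S i → j ∈ C) :
    ∃ x : ℝ, 0 ≤ x ∧ univ \ C = univ.filter (fun i => i ∉ A ∧ x < S i) := by
  set T := insert 0 ((C \ A).image S)
  refine ⟨T.max' (insert_nonempty _ _), le_max' T 0 (mem_insert_self _ _), ?_⟩
  ext i
  simp only [mem_sdiff, mem_univ, true_and, mem_filter, max'_lt_iff, T, forall_mem_insert,
    forall_mem_image]
  constructor
  · intro hiC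
    refine ⟨fun hiA => hiC (hAC hiA), hS i, fun j hj => ?_⟩
    by_contra! hij
    exact hiC (hdown j hj.2 hj.1 i (fun hiA => hiC (hAC hiA)) hij)
  · rintro ⟨hiA, -, hlt⟩ hiC
    exact lt_irrefl _ (hlt ⟨hiC, hiA⟩)

section Cascade

variable {N : ℕ} (L S : Fin N → ℝ)

theorem mem_step_iff {F : Finset (Fin N)} {i : Fin N} :
    i ∈ step L S F ↔ i ∈ F ∨ S i ≤ (∑ j ∈ F, L j) / ((N : ℝ) - F.card) := by
  simp [step]

theorem id_le_step : id ≤ step L S := fun _ => subset_union_left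

theorem subset_cascade (A : Finset (Fin N)) : A ⊆ cascade L S A :=
  Function.id_le_iterate_of_id_le (id_le_step L S) N A

theorem mem_iterate_step_of_le {A : Finset (Fin N)} {i j : Fin N} (hiA : i ∉ A)
    (hji : S j ≤ S i) : ∀ n, i ∈ (step L S)^[n] A → j ∈ (step L S)^[n] A
  | 0, hi => absurd hi hiA
  | n + 1, hi => by
    rw [Function.iterate_succ_apply', mem_step_iff] at hi ⊢
    rcases hi with hi | hi
    · exact Or.inl (mem_iterate_step_of_le hiA hji n hi)
    · exact Or.inr (hji.trans hi)

end Cascade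

theorem fail_in_order_of_free_space_general {N : ℕ} (L S : Fin N → ℝ)
    (hS : ∀ i, 0 < S i) (A : Finset (Fin N)) :
    (∀ i ∉ A, i ∈ cascade L S A → ∀ j ∉ A, S j ≤ S i → j ∈ cascade L S A) ∧
    ∃ x : ℝ, 0 ≤ x ∧
      Finset.univ \ cascade L S A = Finset.univ.filter (fun i => i ∉ A ∧ x < S i) := by
  have hdown : ∀ i ∉ A, i ∈ cascade L S A → ∀ j ∉ A, S j ≤ S i → j ∈ cascade L S A :=
    fun _ hiA hi _ _ hji => mem_iterate_step_of_le L S hiA hji N hi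
  exact ⟨hdown, exists_compl_eq_filter_lt S hS (subset_cascade L S A) hdown⟩

/-- Non-attacked lines fail in order of increasing free space, and the final alive
set is an upper level set of the free space among non-attacked lines. -/
theorem fail_in_order_of_free_space {N : ℕ} (L S : Fin N → ℝ)
    (hL : ∀ i, 0 < L i) (hS : ∀ i, 0 < S i) (A : Finset (Fin N)) :
    (∀ i ∉ A, i ∈ cascade L S A → ∀ j ∉ A, S j ≤ S i → j ∈ cascade L S A) ∧
    ∃ x : ℝ, 0 ≤ x ∧
      Finset.univ \ cascade L S A = Finset.univ.filter (fun i => i ∉ A ∧ x < S i) :=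
  fail_in_order_of_free_space_general L S hS A
end

section
/- Complete-collapse criterion: let A be the attacked set, with total attacked load T = sum_{i in A} L_i, and let the m = N - |A| non-attacked lines be sorted by increasing free space S_(1) <= S_(2) <= ... <= S_(m), with corresponding loads L_(1), ..., L_(m). The cascade initiated by A destroys the entire system (n_∞(A) = 0) if and only if for every j with 1 <= j <= m: ( T + sum_{r=1}^{j-1} L_(r) ) / (m - j + 1) >= S_(j). -/
open Finset
open scoped Classical

/-!
Both directions compare the cascade with the prefixes `G_k = A ∪ {σ 0, …, σ (k-1)}` of the
failure order. If the `j`-th inequality fails, then every line outside `G_j` has free space at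
least `S (σ j)`, which exceeds the load per alive line of `G_j`; so `G_j` is a fixed point of the
(monotone) cascade step containing `A` and the cascade never leaves it. If all inequalities hold,
then by induction the `k`-th iterate of the step already contains `G_k`, and `G_m` is everything.
-/

theorem Monotone.iterate_le_of_le_of_map_le_self {α : Type*} [Preorder α] {f : α → α}
    (hf : Monotone f) {a b : α} (hab : a ≤ b) (hb : f b ≤ b) (n : ℕ) : f^[n] a ≤ b := by
  induction n with
  | zero => exact hab
  | succ n ih =>
    rw [Function.iterate_succ_apply']
    exact (hf ih).trans hb

section Step

variable {N : ℕ} (L S : Fin N → ℝ)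

noncomputable def loadPerAlive (F : Finset (Fin N)) : ℝ :=
  (∑ j ∈ F, L j) / ((N : ℝ) - F.card)

theorem mem_step {F : Finset (Fin N)} {i : Fin N} :
    i ∈ step L S F ↔ i ∈ F ∨ S i ≤ loadPerAlive L F := by
  simp [step, loadPerAlive]

theorem subset_step (F : Finset (Fin N)) : F ⊆ step L S F :=
  subset_union_left

theorem loadPerAlive_mono (hL : ∀ i, 0 ≤ L i) {F F' : Finset (Fin N)} (h : F ⊆ F')
    (hF' : F'.card < N) : loadPerAlive L F ≤ loadPerAlive L F' := by
  have hcard : (F.card : ℝ) ≤ F'.card := by exact_mod_cast card_le_card h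
  have hF'R : (F'.card : ℝ) < N := by exact_mod_cast hF'
  apply div_le_div₀ (sum_nonneg fun i _ => hL i)
    (sum_le_sum_of_subset_of_nonneg h fun i _ _ => hL i) <;> linarith

theorem step_mono (hL : ∀ i, 0 ≤ L i) : Monotone (step L S) := by
  intro F F' h
  rcases lt_or_ge F'.card N with hF' | hF'
  · intro i
    simp only [mem_step]
    exact Or.imp (@h i) fun hi => hi.trans (loadPerAlive_mono L hL h hF')
  · have : F' = univ := eq_univ_of_card F' (le_antisymm (card_le_univ F') (by simpa using hF'))
    exact this ▸ (subset_univ _).trans (subset_step L S univ)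

theorem step_subset_self_of_forall_lt {G : Finset (Fin N)}
    (hG : ∀ i ∉ G, loadPerAlive L G < S i) : step L S G ⊆ G := by
  intro i hi
  by_contra hiG
  exact ((mem_step L S).mp hi).elim hiG fun h => (hG i hiG).not_ge h

theorem cascade_subset_of_step_subset (hL : ∀ i, 0 ≤ L i) {A G : Finset (Fin N)}
    (hAG : A ⊆ G) (hG : step L S G ⊆ G) : cascade L S A ⊆ G :=
  (step_mono L S hL).iterate_le_of_le_of_map_le_self hAG hG N

theorem iterate_step_subset_cascade (A : Finset (Fin N)) {n : ℕ} (hn : n ≤ N) :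
    (step L S)^[n] A ⊆ cascade L S A :=
  Function.monotone_iterate_of_id_le (subset_step L S) hn A

end Step

section Prefix

variable {N m : ℕ} (A : Finset (Fin N)) (σ : Fin m → Fin N)

noncomputable def failedPrefix (k : ℕ) : Finset (Fin N) :=
  A ∪ (univ.filter fun r : Fin m => (r : ℕ) < k).image σ

theorem failedPrefix_zero : failedPrefix A σ 0 = A := by
  simp [failedPrefix]

theorem failedPrefix_succ {k : ℕ} (hk : k < m) :
    failedPrefix A σ (k + 1) = insert (σ ⟨k, hk⟩) (failedPrefix A σ k) := by
  ext i
  simp only [failedPrefix, mem_union, mem_insert, mem_image, mem_filter, mem_univ, true_and]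
  constructor
  · rintro (hi | ⟨r, hr, rfl⟩)
    · exact Or.inr (Or.inl hi)
    · rcases (Nat.lt_succ_iff_lt_or_eq.mp hr) with hr | hr
      · exact Or.inr (Or.inr ⟨r, hr, rfl⟩)
      · exact Or.inl (congrArg σ (Fin.ext hr))
  · rintro (rfl | hi | ⟨r, hr, rfl⟩)
    · exact Or.inr ⟨⟨k, hk⟩, k.lt_succ_self, rfl⟩
    · exact Or.inl hi
    · exact Or.inr ⟨r, hr.trans k.lt_succ_self, rfl⟩

variable {A σ}

section Enumeration

variable (hσ : ∀ i : Fin N, i ∈ univ \ A ↔ ∃ r, σ r = i)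
include hσ

theorem apply_notMem_of_enumerates (r : Fin m) : σ r ∉ A :=
  (mem_sdiff.mp ((hσ (σ r)).mpr ⟨r, rfl⟩)).2

theorem failedPrefix_self : failedPrefix A σ m = univ := by
  refine eq_univ_of_forall fun i => ?_
  by_cases hiA : i ∈ A
  · exact mem_union_left _ hiA
  · obtain ⟨r, rfl⟩ := (hσ i).mp (mem_sdiff.mpr ⟨mem_univ i, hiA⟩)
    exact mem_union_right _ (mem_image_of_mem σ (by simp))

theorem exists_le_of_notMem_failedPrefix {k : ℕ} {i : Fin N} (hi : i ∉ failedPrefix A σ k) :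
    ∃ r : Fin m, k ≤ (r : ℕ) ∧ σ r = i := by
  have hiA : i ∉ A := fun h => hi (mem_union_left _ h)
  obtain ⟨r, rfl⟩ := (hσ i).mp (mem_sdiff.mpr ⟨mem_univ i, hiA⟩)
  refine ⟨r, not_lt.mp fun hr => hi (mem_union_right _ (mem_image_of_mem σ ?_)), rfl⟩
  simpa using hr

variable (hσinj : Function.Injective σ)
include hσinj

theorem apply_notMem_failedPrefix (j : Fin m) : σ j ∉ failedPrefix A σ j := by
  simp only [failedPrefix, mem_union, mem_image, mem_filter, mem_univ, true_and, not_or,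
    hσinj.eq_iff]
  exact ⟨apply_notMem_of_enumerates hσ j, fun ⟨r, hr, hrj⟩ => hr.ne (congrArg Fin.val hrj)⟩

theorem loadPerAlive_failedPrefix (L : Fin N → ℝ) (hm : m = N - A.card) (j : Fin m) :
    loadPerAlive L (failedPrefix A σ j) =
      ((∑ i ∈ A, L i) + ∑ r ∈ univ.filter (fun r => r < j), L (σ r)) /
        ((m : ℝ) - (j : ℕ)) := by
  have hfilter : (univ.filter fun r : Fin m => (r : ℕ) < j) = univ.filter (fun r => r < j) := by
    simp only [Fin.lt_def]
  have hdisj : Disjoint A ((univ.filter fun r : Fin m => (r : ℕ) < j).image σ) := by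
    rw [disjoint_right]
    intro _ hi
    obtain ⟨r, -, rfl⟩ := mem_image.mp hi
    exact apply_notMem_of_enumerates hσ r
  have hcard : (failedPrefix A σ j).card = A.card + j := by
    rw [failedPrefix, card_union_of_disjoint hdisj, card_image_of_injective _ hσinj,
      Fin.card_filter_val_lt, min_eq_right j.is_lt.le]
  have hAN : (A.card : ℝ) + m = N := by
    have := card_le_univ A
    simp only [Fintype.card_fin] at this
    exact_mod_cast (by omega : A.card + m = N)
  rw [loadPerAlive, hcard, failedPrefix, sum_union hdisj,
    sum_image fun _ _ _ _ h => hσinj h, hfilter, ← hAN]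
  push_cast
  ring_nf

end Enumeration

theorem failedPrefix_subset_iterate_step (L S : Fin N → ℝ) (hL : ∀ i, 0 ≤ L i)
    (hfail : ∀ j : Fin m, S (σ j) ≤ loadPerAlive L (failedPrefix A σ j)) :
    ∀ k ≤ m, failedPrefix A σ k ⊆ (step L S)^[k] A := by
  intro k
  induction k with
  | zero => simp [failedPrefix_zero]
  | succ k ih =>
    intro hk
    have hprev : failedPrefix A σ k ⊆ (step L S)^[k] A := ih (Nat.le_of_succ_le hk)
    have hnext : step L S (failedPrefix A σ k) ⊆ (step L S)^[k + 1] A := by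
      rw [Function.iterate_succ_apply']
      exact step_mono L S hL hprev
    rw [failedPrefix_succ A σ hk]
    refine insert_subset (hnext ((mem_step L S).mpr (Or.inr (hfail ⟨k, hk⟩))))
      (hprev.trans ?_)
    rw [Function.iterate_succ_apply']
    exact subset_step L S _

end Prefix

theorem complete_collapse_criterion_general {N : ℕ} (L S : Fin N → ℝ)
    (hL : ∀ i, 0 < L i)
    (A : Finset (Fin N)) (m : ℕ) (hm : m = N - A.card)
    (σ : Fin m → Fin N) (hσinj : Function.Injective σ)
    (hσrange : ∀ i : Fin N, i ∈ Finset.univ \ A ↔ ∃ r, σ r = i)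
    (hσmono : Monotone (fun r => S (σ r))) :
    cascade L S A = Finset.univ ↔
      ∀ j : Fin m,
        S (σ j) ≤
          ((∑ i ∈ A, L i) + ∑ r ∈ Finset.univ.filter (fun r => r < j), L (σ r)) /
            ((m : ℝ) - (j : ℕ)) := by
  have hL₀ : ∀ i, 0 ≤ L i := fun i => (hL i).le
  simp only [← loadPerAlive_failedPrefix hσrange hσinj L hm]
  constructor
  · intro hall j
    by_contra! hj
    have hfixed : step L S (failedPrefix A σ j) ⊆ failedPrefix A σ j :=
      step_subset_self_of_forall_lt L S fun i hi => by
        obtain ⟨r, hjr, rfl⟩ := exists_le_of_notMem_failedPrefix hσrange hi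
        exact hj.trans_le (hσmono (Fin.le_def.mpr hjr))
    have hsub := cascade_subset_of_step_subset L S hL₀ subset_union_left hfixed
    exact apply_notMem_failedPrefix hσrange hσinj j (hsub (hall ▸ mem_univ _))
  · intro hfail
    have hmN : m ≤ N := by omega
    rw [← univ_subset_iff, ← failedPrefix_self hσrange]
    exact (failedPrefix_subset_iterate_step L S hL₀ hfail m le_rfl).trans
      (iterate_step_subset_cascade L S A hmN)

/-- Complete-collapse criterion: sorting the `m = N - |A|` non-attacked lines by
increasing free space via `σ`, the cascade from `A` destroys the whole system iff
for every `j`, the free space of the `j`-th line is at most the total load failed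
so far divided by the number of lines not yet failed. -/
theorem complete_collapse_criterion {N : ℕ} (L S : Fin N → ℝ)
    (hL : ∀ i, 0 < L i) (hS : ∀ i, 0 < S i)
    (A : Finset (Fin N)) (m : ℕ) (hm : m = N - A.card)
    (σ : Fin m → Fin N) (hσinj : Function.Injective σ)
    (hσrange : ∀ i : Fin N, i ∈ Finset.univ \ A ↔ ∃ r, σ r = i)
    (hσmono : Monotone (fun r => S (σ r))) :
    cascade L S A = Finset.univ ↔
      ∀ j : Fin m,
        S (σ j) ≤
          ((∑ i ∈ A, L i) + ∑ r ∈ Finset.univ.filter (fun r => r < j), L (σ r)) /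
            ((m : ℝ) - (j : ℕ)) :=
  complete_collapse_criterion_general L S hL A m hm σ hσinj hσrange hσmono
end

section
/- Reduction from k-Subset-Sum: let a_1, ..., a_N be positive integers, Q > 0, and 0 < k < N. Construct lines with loads L_i = a_i and common free space S_i = Q/(N-k) for all i. Then there exists an attack set A with |A| = k and sum_{i in A} L_i <= Q whose cascade fails all N lines if and only if there exists a subset of {a_1, ..., a_N} of size k summing exactly to Q. -/
open Finset
open scoped Classical

section Cascade

variable {N : ℕ} (L S : Fin N → ℝ)

lemma step_univ : step L S univ = univ := by
  simp [step]

lemma step_eq_self_of_forall_lt {F : Finset (Fin N)}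
    (h : ∀ i, (∑ j ∈ F, L j) / ((N : ℝ) - F.card) < S i) : step L S F = F := by
  simp [step, not_le.mpr (h _)]

lemma step_eq_univ_of_forall_le {F : Finset (Fin N)}
    (h : ∀ i, S i ≤ (∑ j ∈ F, L j) / ((N : ℝ) - F.card)) : step L S F = univ := by
  simp [step, h]

lemma cascade_eq_self_of_step_eq {A : Finset (Fin N)} (h : step L S A = A) :
    cascade L S A = A :=
  Function.iterate_fixed h N

lemma cascade_eq_univ_of_step_eq_univ {A : Finset (Fin N)} (h : step L S A = univ) :
    cascade L S A = univ := by
  cases N with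
  | zero => exact Subsingleton.elim _ _
  | succ M => rw [cascade, Function.iterate_succ_apply, h, Function.iterate_fixed (step_univ L S)]

theorem cascade_const_eq_univ_iff {k : ℕ} (hkN : k < N) (Q : ℝ) {A : Finset (Fin N)}
    (hA : A.card = k) :
    cascade L (fun _ => Q / ((N : ℝ) - k)) A = univ ↔ Q ≤ ∑ i ∈ A, L i := by
  have hNk : (0 : ℝ) < (N : ℝ) - k := sub_pos.mpr (by exact_mod_cast hkN)
  constructor
  · intro hcas
    by_contra! hlt
    have hfix : cascade L (fun _ => Q / ((N : ℝ) - k)) A = A := by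
      refine cascade_eq_self_of_step_eq _ _ (step_eq_self_of_forall_lt _ _ fun _ => ?_)
      rw [hA]
      gcongr
    have := congrArg Finset.card (hfix.symm.trans hcas)
    rw [card_univ, Fintype.card_fin] at this
    omega
  · intro hle
    refine cascade_eq_univ_of_step_eq_univ _ _ (step_eq_univ_of_forall_le _ _ fun _ => ?_)
    rw [hA]
    gcongr

end Cascade

theorem subset_sum_reduction_general (N k : ℕ) (hkN : k < N)
    (a : Fin N → ℕ) (Q : ℕ) :
    ((∃ A : Finset (Fin N), A.card = k ∧ (∑ i ∈ A, a i) ≤ Q ∧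
        cascade (fun i => (a i : ℝ)) (fun _ => (Q : ℝ) / ((N : ℝ) - k)) A = Finset.univ) ↔
      (∃ B : Finset (Fin N), B.card = k ∧ (∑ i ∈ B, a i) = Q)) := by
  refine exists_congr fun A => and_congr_right fun hA => ?_
  rw [cascade_const_eq_univ_iff _ hkN _ hA, ← Nat.cast_sum, Nat.cast_le, le_antisymm_iff]

/-- Reduction from `k`-Subset-Sum: with loads `a i` and common free space `Q/(N-k)`,
there is a size-`k` attack of total load at most `Q` collapsing the whole system iff
some `k` of the integers `a i` sum exactly to `Q`. -/
theorem subset_sum_reduction (N k : ℕ) (hk : 0 < k) (hkN : k < N)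
    (a : Fin N → ℕ) (ha : ∀ i, 0 < a i) (Q : ℕ) (hQ : 0 < Q) :
    ((∃ A : Finset (Fin N), A.card = k ∧ (∑ i ∈ A, a i) ≤ Q ∧
        cascade (fun i => (a i : ℝ)) (fun _ => (Q : ℝ) / ((N : ℝ) - k)) A = Finset.univ) ↔
      (∃ B : Finset (Fin N), B.card = k ∧ (∑ i ∈ B, a i) = Q)) :=
  subset_sum_reduction_general N k hkN a Q
end
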